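/- Let R be a commutative ring, 𝔗 a torsion theory over R, 𝔞 a finitely generated ideal of R, and M an R-module. If x ∈ 𝔞 is a weak M-regular element with respect to 𝔗 (i.e., (0 :_M x) ∈ 𝔗), then 𝔗-Kgrade_R(𝔞,M) = 𝔗-Kgrade_R(𝔞,M/xM) + 1. -/

import Mathlib

/-!
Write `K = (0 :_M x)`. The exact sequences `0 → K → M → M/K → 0` and `0 → M/K → M → M/xM → 0`
(the second map being multiplication by `x`) give long exact sequences in Koszul cohomology
`H^i = H^i(y; -)`. Every `H^i(K)` is a subquotient of a finite power of `K ∈ 𝔗`, so the first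
sequence gives `H^i(M) ∈ 𝔗 ↔ H^i(M/K) ∈ 𝔗`. As `x ∈ (y)`, multiplication by `x` is null-homotopic
on the Koszul complex, so the composite `H^i(M) → H^i(M/K) → H^i(M)` vanishes; hence the image of
`H^i(M/K) → H^i(M)` is a quotient of `coker(H^i(M) → H^i(M/K)) ⊆ H^{i+1}(K)` and lies in `𝔗`.
Modulo `𝔗`, the second sequence therefore reads `0 → H^i(M) → H^i(M/xM) → H^{i+1}(M) → 0`, i.e.
`H^i(M/xM) ∈ 𝔗 ↔ H^i(M) ∈ 𝔗 ∧ H^{i+1}(M) ∈ 𝔗`. Finally `H^0(M) ⊆ (0 :_M x) ∈ 𝔗`, which shifts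
the first non-torsion degree by exactly one.
-/

open CategoryTheory

universe u

noncomputable section

/-- A torsion theory over `R`: a class of `R`-modules closed under isomorphism, submodules,
quotient modules, extensions, and directed colimits (formulated as closure under directed
unions of submodules). -/
structure IsTorsionTheory (R : Type u) [CommRing R] (T : Set (ModuleCat.{u} R)) : Prop where
  mem_of_iso : ∀ {N N' : ModuleCat.{u} R}, (N ≅ N') → N ∈ T → N' ∈ T
  submodule_mem : ∀ {N : ModuleCat.{u} R}, N ∈ T → ∀ S : Submodule R N,
    ModuleCat.of R S ∈ T
  quotient_mem : ∀ {N : ModuleCat.{u} R}, N ∈ T → ∀ S : Submodule R N,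
    ModuleCat.of R (N ⧸ S) ∈ T
  ext_mem : ∀ {N : ModuleCat.{u} R} (S : Submodule R N),
    ModuleCat.of R S ∈ T → ModuleCat.of R (N ⧸ S) ∈ T → N ∈ T
  directed_mem : ∀ {N : ModuleCat.{u} R} {ι : Type u} [Nonempty ι] (S : ι → Submodule R N),
    Directed (· ≤ ·) S → (∀ i, ModuleCat.of R (S i) ∈ T) → iSup S = ⊤ → N ∈ T

variable {R : Type u} [CommRing R]

/-- The "outgoing" differential of the Koszul cocomplex `Hom_R(K_•(x), M)`, whose degree `i`
component is indexed by the `i`-element subsets of `{1, …, r}`. -/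
def koszulDiff {r : ℕ} (x : Fin r → R) (M : Type u) [AddCommGroup M] [Module R M] (i : ℕ) :
    ({s : Finset (Fin r) // s.card = i} → M) →ₗ[R]
      ({s : Finset (Fin r) // s.card = i + 1} → M) where
  toFun φ t := ∑ j ∈ t.1.attach,
    ((-1 : R) ^ (t.1.filter (fun k => k < j.1)).card * x j.1) •
      φ ⟨t.1.erase j.1, by simp [Finset.card_erase_of_mem j.2, t.2]⟩
  map_add' φ ψ := by
    funext t
    simp [Finset.sum_add_distrib, smul_add]
  map_smul' c φ := by
    funext t
    simp [Finset.smul_sum, smul_comm c]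

/-- The "incoming" differential of the Koszul cocomplex in degree `i`
(its source is trivial when `i = 0`). -/
def koszulDiffIn {r : ℕ} (x : Fin r → R) (M : Type u) [AddCommGroup M] [Module R M] (i : ℕ) :
    ({s : Finset (Fin r) // s.card + 1 = i} → M) →ₗ[R]
      ({s : Finset (Fin r) // s.card = i} → M) where
  toFun φ t := ∑ j ∈ t.1.attach,
    ((-1 : R) ^ (t.1.filter (fun k => k < j.1)).card * x j.1) •
      φ ⟨t.1.erase j.1, by rw [Finset.card_erase_add_one j.2]; exact t.2⟩
  map_add' φ ψ := by
    funext t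
    simp [Finset.sum_add_distrib, smul_add]
  map_smul' c φ := by
    funext t
    simp [Finset.smul_sum, smul_comm c]

/-- The `i`-th Koszul cohomology `H^i(x; M)` of `M` with respect to `x₁, …, x_r`, i.e. the
`i`-th cohomology of the cocomplex `Hom_R(K_•(x), M)`. -/
abbrev koszulCohomology {r : ℕ} (x : Fin r → R) (M : Type u) [AddCommGroup M] [Module R M]
    (i : ℕ) : Type u :=
  ↥(LinearMap.ker (koszulDiff x M i)) ⧸
    (Submodule.comap (LinearMap.ker (koszulDiff x M i)).subtype
      (LinearMap.range (koszulDiffIn x M i)))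

/-- The `𝔗`-Koszul grade of the ideal `(x₁, …, x_r)` on `M`: the infimum of the set of `i`
such that `H^i(x; M) ∉ 𝔗` (with `inf ∅ = +∞`). -/
def TKgrade (T : Set (ModuleCat.{u} R)) {r : ℕ} (x : Fin r → R) (M : Type u)
    [AddCommGroup M] [Module R M] : ℕ∞ :=
  sInf ((↑· : ℕ → ℕ∞) '' {i | ModuleCat.of R (koszulCohomology x M i) ∉ T})

open Finset

namespace Finset

lemma sum_sum_erase_eq_zero_of_antisymm {M : Type*} [AddCommGroup M] {ι : Type*} [DecidableEq ι]
    (t : Finset ι) (F : ι → ι → M) (hF : ∀ j ∈ t, ∀ k ∈ t, j ≠ k → F j k = -F k j) :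
    ∑ j ∈ t, ∑ k ∈ t.erase j, F j k = 0 := by
  rw [← sum_finset_product' t.offDiag t (fun j => t.erase j) (by simp [and_comm, ne_comm])]
  refine sum_involution (fun p _ => p.swap) (fun p hp => ?_) (fun p hp _ => ?_)
    (fun p hp => by grind) (fun p _ => p.swap_swap)
  · obtain ⟨hj, hk, hjk⟩ := mem_offDiag.mp hp
    rw [hF _ hj _ hk hjk, Prod.fst_swap, Prod.snd_swap, neg_add_cancel]
  · obtain ⟨-, -, hjk⟩ := mem_offDiag.mp hp
    exact fun h => hjk (congrArg Prod.fst h).symm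

end Finset

lemma ENat.natCast_le_sInf_image_natCast_iff (S : Set ℕ) (n : ℕ) :
    (n : ℕ∞) ≤ sInf ((↑· : ℕ → ℕ∞) '' S) ↔ ∀ i < n, i ∉ S := by
  simp only [le_sInf_iff, Set.forall_mem_image, Nat.cast_le]
  exact ⟨fun h i hi hiS => (h hiS).not_gt hi, fun h i hiS => not_lt.mp fun hi => h i hi hiS⟩

lemma ENat.sInf_setOf_not_eq_add_one {f g : ℕ → Prop} (h0 : f 0)
    (hfg : ∀ i, g i ↔ f i ∧ f (i + 1)) :
    sInf ((↑· : ℕ → ℕ∞) '' {i | ¬ f i}) = sInf ((↑· : ℕ → ℕ∞) '' {i | ¬ g i}) + 1 := by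
  refine ENat.eq_of_forall_natCast_le_iff fun n => ?_
  rcases n with _ | m
  · simp
  rw [natCast_le_sInf_image_natCast_iff, Nat.cast_succ, ENat.add_le_add_iff_right one_ne_top,
    natCast_le_sInf_image_natCast_iff]
  simp only [Set.mem_ofPred_eq, not_not, hfg]
  refine ⟨fun h i hi => ⟨h i (by omega), h (i + 1) (by omega)⟩, fun h i hi => ?_⟩
  rcases i with _ | i
  exacts [h0, (h i (by omega)).2]

section LinearAlgebra

variable {M N P : Type*} [AddCommGroup M] [Module R M] [AddCommGroup N] [Module R N]
  [AddCommGroup P] [Module R P]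

lemma Function.Exact.linearMap_compLeft {f : M →ₗ[R] N} {g : N →ₗ[R] P}
    (hfg : Function.Exact f g) (ι : Type*) : Function.Exact (f.compLeft ι) (g.compLeft ι) := by
  rw [LinearMap.exact_iff, LinearMap.ker_compLeft, LinearMap.range_compLeft,
    LinearMap.exact_iff.mp hfg]

open Pointwise in
lemma LinearMap.range_lsmul (z : R) :
    LinearMap.range (LinearMap.lsmul R M z) = Ideal.span {z} • (⊤ : Submodule R M) := by
  ext m
  simp [Submodule.ideal_span_singleton_smul, Submodule.mem_smul_pointwise_iff_exists]

end LinearAlgebra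

lemma CategoryTheory.ShortComplex.range_moduleCatToCycles (S : ShortComplex (ModuleCat.{u} R)) :
    LinearMap.range S.moduleCatToCycles
      = Submodule.comap (LinearMap.ker S.g.hom).subtype (LinearMap.range S.f.hom) :=
  LinearMap.range_codRestrict _ _ _

namespace CategoryTheory.ShortComplex.ShortExact

variable {S : ShortComplex (CochainComplex (ModuleCat.{u} R) ℕ)} (hS : S.ShortExact) (i : ℕ)
include hS

lemma homology_function_exact₁ :
    Function.Exact (hS.δ i (i + 1) rfl) (HomologicalComplex.homologyMap S.f (i + 1)) :=
  (moduleCat_exact_iff_function_exact _).mp (hS.homology_exact₁ i (i + 1) rfl)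

lemma homology_function_exact₂ :
    Function.Exact (HomologicalComplex.homologyMap S.f i) (HomologicalComplex.homologyMap S.g i) :=
  (moduleCat_exact_iff_function_exact _).mp (hS.homology_exact₂ i)

lemma homology_function_exact₃ :
    Function.Exact (HomologicalComplex.homologyMap S.g i) (hS.δ i (i + 1) rfl) :=
  (moduleCat_exact_iff_function_exact _).mp (hS.homology_exact₃ i (i + 1) rfl)

end CategoryTheory.ShortComplex.ShortExact

namespace IsTorsionTheory

variable {T : Set (ModuleCat.{u} R)} (hT : IsTorsionTheory R T)
  {A B C : Type u} [AddCommGroup A] [Module R A] [AddCommGroup B] [Module R B]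
  [AddCommGroup C] [Module R C]
include hT

lemma of_linearEquiv (e : A ≃ₗ[R] B) (hA : ModuleCat.of R A ∈ T) : ModuleCat.of R B ∈ T :=
  hT.mem_of_iso e.toModuleIso hA

lemma of_injective (f : A →ₗ[R] B) (hf : Function.Injective f) (hB : ModuleCat.of R B ∈ T) :
    ModuleCat.of R A ∈ T :=
  hT.of_linearEquiv (LinearEquiv.ofInjective f hf).symm (hT.submodule_mem hB _)

lemma of_surjective (f : A →ₗ[R] B) (hf : Function.Surjective f) (hA : ModuleCat.of R A ∈ T) :
    ModuleCat.of R B ∈ T :=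
  hT.of_linearEquiv (f.quotKerEquivOfSurjective hf) (hT.quotient_mem hA _)

lemma range_mem_of_domain_mem (f : A →ₗ[R] B) (hA : ModuleCat.of R A ∈ T) :
    ModuleCat.of R (LinearMap.range f) ∈ T :=
  hT.of_surjective f.rangeRestrict f.surjective_rangeRestrict hA

lemma range_mem_of_codomain_mem (f : A →ₗ[R] B) (hB : ModuleCat.of R B ∈ T) :
    ModuleCat.of R (LinearMap.range f) ∈ T :=
  hT.submodule_mem hB _

lemma of_exact {f : A →ₗ[R] B} {g : B →ₗ[R] C} (hfg : Function.Exact f g)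
    (hf : ModuleCat.of R (LinearMap.range f) ∈ T) (hg : ModuleCat.of R (LinearMap.range g) ∈ T) :
    ModuleCat.of R B ∈ T := by
  refine hT.ext_mem (N := ModuleCat.of R B) (LinearMap.ker g) ?_ ?_
  · exact hT.of_linearEquiv (LinearEquiv.ofEq _ _ (LinearMap.exact_iff.mp hfg).symm) hf
  · exact hT.of_linearEquiv g.quotKerEquivRange.symm hg

lemma range_mem_of_comp_eq_zero {D : Type u} [AddCommGroup D] [Module R D] {f : A →ₗ[R] B}
    {g : B →ₗ[R] C} (hfg : Function.Exact f g) (hC : ModuleCat.of R C ∈ T) (h : B →ₗ[R] D)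
    (hf : h ∘ₗ f = 0) : ModuleCat.of R (LinearMap.range h) ∈ T := by
  have hle : LinearMap.ker g ≤ LinearMap.ker h := by
    rw [LinearMap.exact_iff.mp hfg, LinearMap.range_le_ker_iff]
    exact hf
  refine hT.of_surjective ((LinearMap.ker g).liftQ h.rangeRestrict (by simpa using hle)) ?_
    (hT.of_linearEquiv g.quotKerEquivRange.symm (hT.range_mem_of_codomain_mem g hC))
  rw [← LinearMap.range_eq_top, Submodule.range_liftQ, LinearMap.range_rangeRestrict]

lemma prod_mem (hA : ModuleCat.of R A ∈ T) (hB : ModuleCat.of R B ∈ T) :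
    ModuleCat.of R (A × B) ∈ T :=
  hT.of_exact Function.Exact.inl_snd (hT.range_mem_of_domain_mem _ hA)
    (hT.range_mem_of_codomain_mem _ hB)

lemma pi_mem (hA : ModuleCat.of R A ∈ T) (ι : Type) [Finite ι] : ModuleCat.of R (ι → A) ∈ T := by
  obtain ⟨n, ⟨e⟩⟩ := Finite.exists_equiv_fin ι
  refine hT.of_linearEquiv (LinearEquiv.funCongrLeft R A e) ?_
  clear e
  induction n with
  | zero =>
    exact hT.of_injective (0 : (Fin 0 → A) →ₗ[R] A) (Function.injective_of_subsingleton _) hA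
  | succ n ih => exact hT.of_linearEquiv (Fin.consLinearEquiv R fun _ => A) (hT.prod_mem hA ih)

section Homology

variable {S : ShortComplex (CochainComplex (ModuleCat.{u} R) ℕ)} (hS : S.ShortExact)
include hS

lemma homology_mem_iff_of_shortExact (hA : ∀ j, S.X₁.homology j ∈ T) (i : ℕ) :
    S.X₂.homology i ∈ T ↔ S.X₃.homology i ∈ T :=
  ⟨fun hB => hT.of_exact (hS.homology_function_exact₃ i) (hT.range_mem_of_domain_mem _ hB)
      (hT.range_mem_of_codomain_mem _ (hA (i + 1))),
    fun hC => hT.of_exact (hS.homology_function_exact₂ i) (hT.range_mem_of_domain_mem _ (hA i))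
      (hT.range_mem_of_codomain_mem _ hC)⟩

lemma range_homologyMap_mem_of_shortExact {i : ℕ} (hA : S.X₁.homology (i + 1) ∈ T)
    {D : CochainComplex (ModuleCat.{u} R) ℕ} (u : S.X₃ ⟶ D)
    (hu : HomologicalComplex.homologyMap (S.g ≫ u) i = 0) :
    ModuleCat.of R (LinearMap.range (HomologicalComplex.homologyMap u i).hom) ∈ T := by
  refine hT.range_mem_of_comp_eq_zero (hS.homology_function_exact₃ i) hA _ ?_
  rw [← ModuleCat.hom_comp, ← HomologicalComplex.homologyMap_comp, hu, ModuleCat.hom_zero]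

lemma homology_mem_iff_and_of_shortExact
    (hf : ∀ j, ModuleCat.of R (LinearMap.range (HomologicalComplex.homologyMap S.f j).hom) ∈ T)
    (hA : ∀ j, S.X₁.homology j ∈ T ↔ S.X₂.homology j ∈ T) (i : ℕ) :
    S.X₃.homology i ∈ T ↔ S.X₂.homology i ∈ T ∧ S.X₂.homology (i + 1) ∈ T := by
  constructor
  · intro hC
    refine ⟨hT.of_exact (hS.homology_function_exact₂ i) (hf i)
      (hT.range_mem_of_codomain_mem _ hC), (hA (i + 1)).mp ?_⟩
    exact hT.of_exact (hS.homology_function_exact₁ i) (hT.range_mem_of_domain_mem _ hC)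
      (hf (i + 1))
  · rintro ⟨hi, hi'⟩
    exact hT.of_exact (hS.homology_function_exact₃ i) (hT.range_mem_of_domain_mem _ hi)
      (hT.range_mem_of_codomain_mem _ ((hA (i + 1)).mpr hi'))

end Homology

end IsTorsionTheory

section KoszulSign

variable (R) {r : ℕ}

def koszulSign (t : Finset (Fin r)) (j : Fin r) : R :=
  (-1) ^ #{k ∈ t | k < j}

variable {R}

lemma koszulSign_mul_self (t : Finset (Fin r)) (j : Fin r) :
    koszulSign R t j * koszulSign R t j = 1 := by
  rw [koszulSign, ← pow_add]
  exact Even.neg_one_pow ⟨_, rfl⟩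

lemma koszulSign_erase_of_not_lt {j k : Fin r} (t : Finset (Fin r)) (h : ¬ k < j) :
    koszulSign R (t.erase k) j = koszulSign R t j := by
  rw [koszulSign, filter_erase, erase_eq_of_notMem (by simp [h]), koszulSign]

lemma koszulSign_erase_of_lt {j k : Fin r} {t : Finset (Fin r)} (hk : k ∈ t) (h : k < j) :
    koszulSign R (t.erase k) j = -koszulSign R t j := by
  have hpos : 0 < #{m ∈ t | m < j} := card_pos.mpr ⟨k, by simp [hk, h]⟩
  rw [koszulSign, koszulSign, filter_erase, card_erase_of_mem (by simp [hk, h]),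
    ← Nat.succ_pred_eq_of_pos hpos, pow_succ, Nat.succ_sub_one]
  ring

lemma koszulSign_insert_of_not_lt {j k : Fin r} (t : Finset (Fin r)) (h : ¬ k < j) :
    koszulSign R (insert k t) j = koszulSign R t j := by
  rw [koszulSign, filter_insert, if_neg h, koszulSign]

lemma koszulSign_insert_of_lt {j k : Fin r} {t : Finset (Fin r)} (hk : k ∉ t) (h : k < j) :
    koszulSign R (insert k t) j = -koszulSign R t j := by
  rw [koszulSign, filter_insert, if_pos h, card_insert_of_notMem (by simp [hk]), pow_succ,
    koszulSign]
  ring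

lemma koszulSign_mul_erase_antisymm {j k : Fin r} {t : Finset (Fin r)} (hj : j ∈ t) (hk : k ∈ t)
    (hjk : j ≠ k) :
    koszulSign R t j * koszulSign R (t.erase j) k
      = -(koszulSign R t k * koszulSign R (t.erase k) j) := by
  rcases hjk.lt_or_gt with h | h
  · rw [koszulSign_erase_of_lt hj h, koszulSign_erase_of_not_lt t h.not_gt]
    ring
  · rw [koszulSign_erase_of_lt hk h, koszulSign_erase_of_not_lt t h.not_gt]
    ring

lemma koszulSign_mul_insert_antisymm {j k : Fin r} {t : Finset (Fin r)} (hj : j ∉ t)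
    (hk : k ∈ t) :
    koszulSign R t j * koszulSign R (insert j t) k
      = -(koszulSign R t k * koszulSign R (t.erase k) j) := by
  rcases (ne_of_mem_of_not_mem hk hj).symm.lt_or_gt with h | h
  · rw [koszulSign_insert_of_lt hj h, koszulSign_erase_of_not_lt t h.not_gt]
    ring
  · rw [koszulSign_insert_of_not_lt t h.not_gt, koszulSign_erase_of_lt hk h]
    ring

lemma koszulSign_erase_self (t : Finset (Fin r)) (j : Fin r) :
    koszulSign R (t.erase j) j = koszulSign R t j :=
  koszulSign_erase_of_not_lt t (lt_irrefl j)

lemma koszulSign_insert_self (t : Finset (Fin r)) (j : Fin r) :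
    koszulSign R (insert j t) j = koszulSign R t j :=
  koszulSign_insert_of_not_lt t (lt_irrefl j)

end KoszulSign

section TotalKoszul

/- Cochains are first handled as functions on all subsets of `Fin r`, where `d ∘ d = 0` and the
homotopy formula hold without any cardinality bookkeeping; `extendByZero` below embeds the
degree-`i` cochains of `koszulDiff`. -/

variable {r : ℕ} (x : Fin r → R) (M : Type u) [AddCommGroup M] [Module R M]

def totalKoszulDiff : (Finset (Fin r) → M) →ₗ[R] (Finset (Fin r) → M) where
  toFun φ t := ∑ j ∈ t, (koszulSign R t j * x j) • φ (t.erase j)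
  map_add' φ ψ := by
    funext t
    simp [sum_add_distrib]
  map_smul' c φ := by
    funext t
    simp [smul_sum, smul_comm c]

def totalContraction (c : Fin r → R) : (Finset (Fin r) → M) →ₗ[R] (Finset (Fin r) → M) where
  toFun φ t := ∑ j ∈ tᶜ, (c j * koszulSign R t j) • φ (insert j t)
  map_add' φ ψ := by
    funext t
    simp [sum_add_distrib]
  map_smul' a φ := by
    funext t
    simp [smul_sum, smul_comm a]

variable {x M}

lemma totalKoszulDiff_apply (φ : Finset (Fin r) → M) (t : Finset (Fin r)) :
    totalKoszulDiff x M φ t = ∑ j ∈ t, (koszulSign R t j * x j) • φ (t.erase j) := rfl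

lemma totalContraction_apply (c : Fin r → R) (φ : Finset (Fin r) → M) (t : Finset (Fin r)) :
    totalContraction M c φ t = ∑ j ∈ tᶜ, (c j * koszulSign R t j) • φ (insert j t) := rfl

lemma totalKoszulDiff_totalKoszulDiff (φ : Finset (Fin r) → M) :
    totalKoszulDiff x M (totalKoszulDiff x M φ) = 0 := by
  funext t
  simp only [totalKoszulDiff_apply, smul_sum, smul_smul, Pi.zero_apply]
  refine sum_sum_erase_eq_zero_of_antisymm t _ fun j hj k hk hjk => ?_
  rw [erase_right_comm, ← neg_smul]
  congr 1
  linear_combination (x j * x k) * koszulSign_mul_erase_antisymm (R := R) hj hk hjk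

lemma smul_totalContraction_apply_erase (c : Fin r → R) (φ : Finset (Fin r) → M)
    {t : Finset (Fin r)} {k : Fin r} (hk : k ∈ t) :
    (koszulSign R t k * x k) • totalContraction M c φ (t.erase k)
      = (c k * x k) • φ t + ∑ j ∈ tᶜ,
          (koszulSign R t k * x k * (c j * koszulSign R (t.erase k) j)) •
            φ (insert j (t.erase k)) := by
  rw [totalContraction_apply, compl_erase, sum_insert (by simpa using hk), smul_add, smul_smul,
    koszulSign_erase_self, insert_erase hk, smul_sum]
  congr 1
  · congr 1
    linear_combination (c k * x k) * koszulSign_mul_self (R := R) t k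
  · exact sum_congr rfl fun j _ => smul_smul _ _ _

lemma smul_totalKoszulDiff_apply_insert (c : Fin r → R) (φ : Finset (Fin r) → M)
    {t : Finset (Fin r)} {j : Fin r} (hj : j ∉ t) :
    (c j * koszulSign R t j) • totalKoszulDiff x M φ (insert j t)
      = (c j * x j) • φ t + ∑ k ∈ t,
          (c j * koszulSign R t j * (koszulSign R (insert j t) k * x k)) •
            φ (insert j (t.erase k)) := by
  rw [totalKoszulDiff_apply, sum_insert hj, smul_add, smul_smul, koszulSign_insert_self,
    erase_insert hj, smul_sum]
  congr 1
  · congr 1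
    linear_combination (c j * x j) * koszulSign_mul_self (R := R) t j
  · refine sum_congr rfl fun k hk => ?_
    rw [smul_smul, erase_insert_of_ne (ne_of_mem_of_not_mem hk hj).symm]

lemma totalKoszulDiff_totalContraction_add (c : Fin r → R) (φ : Finset (Fin r) → M) :
    totalKoszulDiff x M (totalContraction M c φ) + totalContraction M c (totalKoszulDiff x M φ)
      = (∑ j, c j * x j) • φ := by
  funext t
  -- The terms with `j = k` give `(c k * x k) • φ t`; the remaining ones cancel in pairs.
  have hcancel : ∀ k ∈ t, ∀ j ∈ tᶜ,
      (koszulSign R t k * x k * (c j * koszulSign R (t.erase k) j)) • φ (insert j (t.erase k))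
        + (c j * koszulSign R t j * (koszulSign R (insert j t) k * x k)) •
            φ (insert j (t.erase k)) = 0 := by
    intro k hk j hj
    rw [← add_smul]
    convert zero_smul R _
    linear_combination (c j * x k) * koszulSign_mul_insert_antisymm (R := R) (mem_compl.mp hj) hk
  change ∑ k ∈ t, (koszulSign R t k * x k) • totalContraction M c φ (t.erase k)
      + ∑ j ∈ tᶜ, (c j * koszulSign R t j) • totalKoszulDiff x M φ (insert j t) = _
  rw [sum_congr rfl fun k hk => smul_totalContraction_apply_erase c φ hk,
    sum_congr rfl fun j hj => smul_totalKoszulDiff_apply_insert c φ (mem_compl.mp hj),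
    sum_add_distrib, sum_add_distrib, sum_comm (s := tᶜ) (t := t), Pi.smul_apply, sum_smul,
    ← sum_add_sum_compl t, add_add_add_comm, ← sum_add_distrib (s := t) (f := fun k => ∑ j ∈ tᶜ, _),
    sum_congr rfl fun k hk => (sum_add_distrib.symm.trans (sum_eq_zero (hcancel k hk))),
    sum_const_zero, add_zero]

end TotalKoszul

section Graded

variable {r : ℕ} (M : Type u) [AddCommGroup M] [Module R M]

variable (R) in
def extendByZero (i : ℕ) :
    ({s : Finset (Fin r) // s.card = i} → M) →ₗ[R] (Finset (Fin r) → M) where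
  toFun φ s := if h : s.card = i then φ ⟨s, h⟩ else 0
  map_add' φ ψ := by
    funext s
    by_cases h : s.card = i <;> simp [h]
  map_smul' c φ := by
    funext s
    by_cases h : s.card = i <;> simp [h]

variable {M}

lemma extendByZero_of_card_eq {i : ℕ} (φ : {s : Finset (Fin r) // s.card = i} → M)
    {s : Finset (Fin r)} (h : s.card = i) : extendByZero R M i φ s = φ ⟨s, h⟩ := dif_pos h

lemma extendByZero_of_card_ne {i : ℕ} (φ : {s : Finset (Fin r) // s.card = i} → M)
    {s : Finset (Fin r)} (h : s.card ≠ i) : extendByZero R M i φ s = 0 := dif_neg h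

lemma extendByZero_injective (i : ℕ) :
    Function.Injective (extendByZero (r := r) R M i) := fun φ ψ h => by
  funext s
  simpa [extendByZero_of_card_eq _ s.2] using congrFun h s.1

variable (x : Fin r → R)

lemma extendByZero_koszulDiff (i : ℕ) (φ : {s : Finset (Fin r) // s.card = i} → M) :
    extendByZero R M (i + 1) (koszulDiff x M i φ) = totalKoszulDiff x M (extendByZero R M i φ) := by
  funext s
  rw [totalKoszulDiff_apply]
  by_cases hs : s.card = i + 1
  · rw [extendByZero_of_card_eq _ hs, ← sum_attach]
    refine sum_congr rfl fun j _ => ?_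
    rw [extendByZero_of_card_eq _ (by rw [card_erase_of_mem j.2, hs, Nat.add_sub_cancel])]
    rfl
  · rw [extendByZero_of_card_ne _ hs]
    refine (sum_eq_zero fun j hj => ?_).symm
    rw [extendByZero_of_card_ne _ (by rw [card_erase_of_mem hj]; grind [card_pos]), smul_zero]

variable (M) in
def koszulContraction (c : Fin r → R) (i : ℕ) :
    ({s : Finset (Fin r) // s.card = i + 1} → M) →ₗ[R]
      ({s : Finset (Fin r) // s.card = i} → M) :=
  LinearMap.funLeft R M Subtype.val ∘ₗ totalContraction M c ∘ₗ extendByZero R M (i + 1)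

lemma extendByZero_koszulContraction (c : Fin r → R) (i : ℕ)
    (φ : {s : Finset (Fin r) // s.card = i + 1} → M) :
    extendByZero R M i (koszulContraction M c i φ)
      = totalContraction M c (extendByZero R M (i + 1) φ) := by
  funext s
  by_cases hs : s.card = i
  · exact extendByZero_of_card_eq _ hs
  · rw [extendByZero_of_card_ne _ hs, totalContraction_apply]
    refine (sum_eq_zero fun j hj => ?_).symm
    rw [extendByZero_of_card_ne _ (by rw [card_insert_of_notMem (mem_compl.mp hj)]; omega),
      smul_zero]

lemma totalContraction_extendByZero_zero (c : Fin r → R)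
    (φ : {s : Finset (Fin r) // s.card = 0} → M) :
    totalContraction M c (extendByZero R M 0 φ) = 0 := by
  funext s
  refine sum_eq_zero fun j _ => ?_
  rw [extendByZero_of_card_ne _ (by simp), smul_zero]

lemma koszulDiff_koszulDiff (i : ℕ) (φ : {s : Finset (Fin r) // s.card = i} → M) :
    koszulDiff x M (i + 1) (koszulDiff x M i φ) = 0 := by
  apply extendByZero_injective (R := R) (M := M) (i + 1 + 1)
  rw [extendByZero_koszulDiff, extendByZero_koszulDiff, totalKoszulDiff_totalKoszulDiff, map_zero]

lemma koszulDiff_koszulContraction_add (c : Fin r → R) (i : ℕ)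
    (φ : {s : Finset (Fin r) // s.card = i + 1} → M) :
    koszulDiff x M i (koszulContraction M c i φ)
        + koszulContraction M c (i + 1) (koszulDiff x M (i + 1) φ)
      = (∑ j, c j * x j) • φ := by
  apply extendByZero_injective (R := R) (M := M) (i + 1)
  rw [map_add, map_smul, extendByZero_koszulDiff, extendByZero_koszulContraction,
    extendByZero_koszulContraction, extendByZero_koszulDiff,
    totalKoszulDiff_totalContraction_add]

lemma koszulContraction_koszulDiff_zero (c : Fin r → R)
    (φ : {s : Finset (Fin r) // s.card = 0} → M) :
    koszulContraction M c 0 (koszulDiff x M 0 φ) = (∑ j, c j * x j) • φ := by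
  apply extendByZero_injective (R := R) (M := M) 0
  rw [map_smul, extendByZero_koszulContraction, extendByZero_koszulDiff,
    ← totalKoszulDiff_totalContraction_add c, totalContraction_extendByZero_zero, map_zero,
    zero_add]

end Graded

section Complex

variable {r : ℕ} (x : Fin r → R)

def koszulComplex (M : Type u) [AddCommGroup M] [Module R M] :
    CochainComplex (ModuleCat.{u} R) ℕ :=
  CochainComplex.of (fun i => ModuleCat.of R ({s : Finset (Fin r) // s.card = i} → M))
    (fun i => ModuleCat.ofHom (koszulDiff x M i))
    (fun i => ModuleCat.hom_ext (LinearMap.ext (koszulDiff_koszulDiff x i)))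

lemma koszulComplex_d (M : Type u) [AddCommGroup M] [Module R M] (i : ℕ) :
    (koszulComplex x M).d i (i + 1) = ModuleCat.ofHom (koszulDiff x M i) := by
  simp [koszulComplex]

variable {M N P : Type u} [AddCommGroup M] [Module R M] [AddCommGroup N] [Module R N]
  [AddCommGroup P] [Module R P]

lemma extendByZero_compLeft (f : M →ₗ[R] N) (i : ℕ)
    (φ : {s : Finset (Fin r) // s.card = i} → M) :
    extendByZero R N i (f.compLeft _ φ) = f.compLeft _ (extendByZero R M i φ) := by
  funext s
  by_cases h : s.card = i
  · simp [extendByZero_of_card_eq _ h]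
  · simp [extendByZero_of_card_ne _ h]

lemma koszulDiff_compLeft (f : M →ₗ[R] N) (i : ℕ) (φ : {s : Finset (Fin r) // s.card = i} → M) :
    koszulDiff x N i (f.compLeft _ φ) = f.compLeft _ (koszulDiff x M i φ) := by
  apply extendByZero_injective (R := R) (M := N)
  rw [extendByZero_koszulDiff, extendByZero_compLeft, extendByZero_compLeft,
    extendByZero_koszulDiff]
  funext t
  simp [totalKoszulDiff_apply]

def koszulComplex.map (f : M →ₗ[R] N) : koszulComplex x M ⟶ koszulComplex x N where
  f i := ModuleCat.ofHom (f.compLeft _)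
  comm' i j hij := by
    obtain rfl : i + 1 = j := hij
    rw [koszulComplex_d, koszulComplex_d]
    exact ModuleCat.hom_ext (LinearMap.ext (koszulDiff_compLeft x f i))

lemma koszulComplex.map_comp (f : M →ₗ[R] N) (g : N →ₗ[R] P) :
    koszulComplex.map x (g ∘ₗ f) = koszulComplex.map x f ≫ koszulComplex.map x g := rfl

lemma koszulComplex.map_zero : koszulComplex.map x (0 : M →ₗ[R] N) = 0 := rfl

lemma koszulComplex.shortExact_map {f : M →ₗ[R] N} {g : N →ₗ[R] P}
    (hf : Function.Injective f) (hg : Function.Surjective g) (hfg : Function.Exact f g) :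
    (ShortComplex.mk (koszulComplex.map x f) (koszulComplex.map x g) (by
      rw [← koszulComplex.map_comp, hfg.linearMap_comp_eq_zero,
        koszulComplex.map_zero])).ShortExact :=
  HomologicalComplex.shortExact_of_degreewise_shortExact _ fun _ =>
    ModuleCat.shortComplex_shortExact _ (hfg.linearMap_compLeft _) hf.comp_left hg.comp_left

end Complex

section Homotopy

variable {r : ℕ} (x : Fin r → R) {M : Type u} [AddCommGroup M] [Module R M]

def koszulComplex.contraction (c : Fin r → R) :
    ∀ i j, (ComplexShape.up ℕ).Rel j i → ((koszulComplex x M).X i ⟶ (koszulComplex x M).X j) :=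
  fun _ j h => by
    subst h
    exact ModuleCat.ofHom (koszulContraction M c j)

lemma koszulComplex.map_lsmul_eq_nullHomotopicMap (c : Fin r → R) :
    koszulComplex.map x (LinearMap.lsmul R M (∑ j, c j * x j))
      = Homotopy.nullHomotopicMap' (koszulComplex.contraction x c) := by
  ext i : 1
  apply ModuleCat.hom_ext
  apply LinearMap.ext
  intro φ
  rcases i with _ | i
  · rw [Homotopy.nullHomotopicMap'_f_of_not_rel_right (rfl : (ComplexShape.up ℕ).Rel 0 1)
      (by simp), koszulComplex_d]
    exact (koszulContraction_koszulDiff_zero x c φ).symm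
  · rw [Homotopy.nullHomotopicMap'_f (rfl : (ComplexShape.up ℕ).Rel i (i + 1)) rfl,
      koszulComplex_d, koszulComplex_d]
    exact (koszulDiff_koszulContraction_add x c i φ).symm.trans (add_comm _ _)

lemma koszulComplex.homologyMap_lsmul_eq_zero {z : R} (hz : z ∈ Ideal.span (Set.range x))
    (i : ℕ) :
    HomologicalComplex.homologyMap (koszulComplex.map x (LinearMap.lsmul R M z)) i = 0 := by
  obtain ⟨c, rfl⟩ := (Submodule.mem_span_range_iff_exists_fun R).mp hz
  simp_rw [smul_eq_mul]
  rw [koszulComplex.map_lsmul_eq_nullHomotopicMap,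
    (Homotopy.nullHomotopy' (koszulComplex.contraction x c)).homologyMap_eq,
    HomologicalComplex.homologyMap_zero]

end Homotopy

section Cohomology

variable {r : ℕ} (x : Fin r → R) (M : Type u) [AddCommGroup M] [Module R M]

lemma koszulDiffIn_succ (n : ℕ) :
    koszulDiffIn x M (n + 1) = koszulDiff x M n ∘ₗ (LinearEquiv.funCongrLeft R M
      (Equiv.subtypeEquivRight fun _ => Nat.add_right_cancel_iff.symm)).toLinearMap := rfl

lemma range_koszulDiffIn_zero : LinearMap.range (koszulDiffIn x M 0) = ⊥ := by
  have : IsEmpty {s : Finset (Fin r) // s.card + 1 = 0} := ⟨fun s => Nat.succ_ne_zero _ s.2⟩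
  rw [LinearMap.range_eq_bot, Subsingleton.elim (koszulDiffIn x M 0) 0]

lemma koszulComplex.ker_sc_g (i : ℕ) :
    LinearMap.ker ((koszulComplex x M).sc i).g.hom = LinearMap.ker (koszulDiff x M i) := by
  change LinearMap.ker ((koszulComplex x M).d i ((ComplexShape.up ℕ).next i)).hom = _
  rw [CochainComplex.next, koszulComplex_d]
  rfl

lemma koszulComplex.range_sc_f (i : ℕ) :
    LinearMap.range ((koszulComplex x M).sc i).f.hom = LinearMap.range (koszulDiffIn x M i) := by
  change LinearMap.range ((koszulComplex x M).d ((ComplexShape.up ℕ).prev i) i).hom = _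
  rcases i with _ | n
  · rw [CochainComplex.prev_nat_zero, HomologicalComplex.shape _ _ _ (by simp),
      range_koszulDiffIn_zero]
    exact LinearMap.range_zero
  · rw [CochainComplex.prev_nat_succ, koszulComplex_d, koszulDiffIn_succ, LinearMap.range_comp,
      LinearEquiv.range, Submodule.map_top]
    rfl

def koszulComplex.homologyIso (i : ℕ) :
    ModuleCat.of R (koszulCohomology x M i) ≅ (koszulComplex x M).homology i := by
  have hker := (koszulComplex.ker_sc_g x M i).symm
  refine (Submodule.Quotient.equiv _ _ (LinearEquiv.ofEq _ _ hker) ?_).toModuleIso ≪≫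
    ((koszulComplex x M).sc i).moduleCatHomologyIso.symm
  rw [ShortComplex.range_moduleCatToCycles, koszulComplex.range_sc_f]
  ext b
  simp only [Submodule.mem_map, Submodule.mem_comap, Submodule.subtype_apply]
  exact ⟨fun ⟨_, hw, hwb⟩ => hwb ▸ hw, fun hb => ⟨⟨b.1, by rw [hker]; exact b.2⟩, hb, rfl⟩⟩

end Cohomology

section KoszulTorsion

variable {r : ℕ} (x : Fin r → R) {M : Type u} [AddCommGroup M] [Module R M]

lemma koszulDiff_zero_apply_singleton (φ : {s : Finset (Fin r) // s.card = 0} → M) (j : Fin r) :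
    koszulDiff x M 0 φ ⟨{j}, card_singleton j⟩ = x j • φ ⟨∅, card_empty⟩ := by
  have h := congrFun (extendByZero_koszulDiff x 0 φ) {j}
  rw [extendByZero_of_card_eq _ (card_singleton j), totalKoszulDiff_apply, sum_singleton,
    erase_singleton, extendByZero_of_card_eq _ card_empty] at h
  rw [h, koszulSign, filter_singleton, if_neg (lt_irrefl j), card_empty, pow_zero, one_mul]

lemma smul_apply_empty_eq_zero_of_koszulDiff_eq_zero
    {φ : {s : Finset (Fin r) // s.card = 0} → M} (hφ : koszulDiff x M 0 φ = 0) {z : R}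
    (hz : z ∈ Ideal.span (Set.range x)) : z • φ ⟨∅, card_empty⟩ = 0 := by
  have hrange : Set.range x ⊆ (R ∙ φ ⟨∅, card_empty⟩).annihilator := by
    rintro _ ⟨j, rfl⟩
    rw [SetLike.mem_coe, Submodule.mem_annihilator_span_singleton,
      ← koszulDiff_zero_apply_singleton, hφ, Pi.zero_apply]
  exact (Submodule.mem_annihilator_span_singleton _ _).mp (Ideal.span_le.mpr hrange hz)

namespace IsTorsionTheory

variable {T : Set (ModuleCat.{u} R)} (hT : IsTorsionTheory R T)
include hT

lemma koszulCohomology_mem (hM : ModuleCat.of R M ∈ T) (i : ℕ) :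
    ModuleCat.of R (koszulCohomology x M i) ∈ T :=
  hT.quotient_mem (hT.submodule_mem (N := ModuleCat.of R _) (hT.pi_mem hM _) _) _

lemma homology_koszulComplex_mem_iff (M : Type u) [AddCommGroup M] [Module R M] (i : ℕ) :
    (koszulComplex x M).homology i ∈ T ↔ ModuleCat.of R (koszulCohomology x M i) ∈ T :=
  ⟨hT.mem_of_iso (koszulComplex.homologyIso x M i).symm,
    hT.mem_of_iso (koszulComplex.homologyIso x M i)⟩

lemma koszulCohomology_zero_mem {z : R} (hz : z ∈ Ideal.span (Set.range x))
    (hreg : ModuleCat.of R (LinearMap.ker (LinearMap.lsmul R M z)) ∈ T) :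
    ModuleCat.of R (koszulCohomology x M 0) ∈ T := by
  let e₀ : {s : Finset (Fin r) // s.card = 0} := ⟨∅, card_empty⟩
  let ev : LinearMap.ker (koszulDiff x M 0) →ₗ[R] LinearMap.ker (LinearMap.lsmul R M z) :=
    ((LinearMap.proj e₀).comp (LinearMap.ker (koszulDiff x M 0)).subtype).codRestrict _
      fun φ => smul_apply_empty_eq_zero_of_koszulDiff_eq_zero x φ.2 hz
  have hev : Function.Injective ev := by
    intro φ ψ h
    refine Subtype.ext (funext fun s => ?_)
    rw [show s = e₀ from Subtype.ext (card_eq_zero.mp s.2)]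
    exact congrArg Subtype.val h
  exact hT.quotient_mem (N := ModuleCat.of R _) (hT.of_injective ev hev hreg) _

lemma koszulCohomology_quotient_mem_iff {z : R} (hz : z ∈ Ideal.span (Set.range x))
    (hreg : ModuleCat.of R (LinearMap.ker (LinearMap.lsmul R M z)) ∈ T) (i : ℕ) :
    ModuleCat.of R (koszulCohomology x (M ⧸ Ideal.span {z} • (⊤ : Submodule R M)) i) ∈ T ↔
      ModuleCat.of R (koszulCohomology x M i) ∈ T ∧
        ModuleCat.of R (koszulCohomology x M (i + 1)) ∈ T := by
  set K := LinearMap.ker (LinearMap.lsmul R M z)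
  set I := Ideal.span {z} • (⊤ : Submodule R M)
  let mulZ : M ⧸ K →ₗ[R] M := K.liftQ (LinearMap.lsmul R M z) le_rfl
  have hS₁ := koszulComplex.shortExact_map x K.injective_subtype K.mkQ_surjective
    (LinearMap.exact_subtype_mkQ K)
  have hS₂ := koszulComplex.shortExact_map x (f := mulZ)
    (LinearMap.ker_eq_bot.mp (Submodule.ker_liftQ_eq_bot _ _ _ le_rfl)) I.mkQ_surjective
    (by rw [LinearMap.exact_iff, Submodule.ker_mkQ, Submodule.range_liftQ, LinearMap.range_lsmul])
  have hK (j : ℕ) : (koszulComplex x K).homology j ∈ T :=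
    (hT.homology_koszulComplex_mem_iff x K j).mpr (hT.koszulCohomology_mem x hreg j)
  have hM (j : ℕ) : (koszulComplex x M).homology j ∈ T ↔ (koszulComplex x (M ⧸ K)).homology j ∈ T :=
    hT.homology_mem_iff_of_shortExact hS₁ hK j
  have hmulZ (j : ℕ) : ModuleCat.of R
      (LinearMap.range (HomologicalComplex.homologyMap (koszulComplex.map x mulZ) j).hom) ∈ T := by
    refine hT.range_homologyMap_mem_of_shortExact hS₁ (hK (j + 1)) _ ?_
    rw [← koszulComplex.map_comp x K.mkQ mulZ, K.liftQ_mkQ]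
    exact koszulComplex.homologyMap_lsmul_eq_zero x hz j
  simp only [← hT.homology_koszulComplex_mem_iff x]
  exact hT.homology_mem_iff_and_of_shortExact hS₂ hmulZ (fun j => (hM j).symm) i

end IsTorsionTheory

end KoszulTorsion

theorem tKgrade_eq_tKgrade_quotient_add_one (T : Set (ModuleCat.{u} R))
    (hT : IsTorsionTheory R T) (a : Ideal R) (M : Type u) [AddCommGroup M] [Module R M]
    {r : ℕ} (y : Fin r → R) (hy : Ideal.span (Set.range y) = a)
    (x : R) (hxa : x ∈ a)
    (hreg : ModuleCat.of R ↥(LinearMap.ker (LinearMap.lsmul R M x)) ∈ T) :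
    TKgrade T y M = TKgrade T y (M ⧸ (Ideal.span {x} • (⊤ : Submodule R M))) + 1 := by
  have hx : x ∈ Ideal.span (Set.range y) := hy ▸ hxa
  exact ENat.sInf_setOf_not_eq_add_one (hT.koszulCohomology_zero_mem y hx hreg)
    (hT.koszulCohomology_quotient_mem_iff y hx hreg)
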